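/- arXiv:2203.01440 — 6 statements merged into one kernel-verified Lean document; each statement's English description precedes it below -/
import Mathlib

section
/- Basic composition of differentially private mechanisms (pairwise form): Let μ₁ and μ₁' be probability measures on a measurable space Ω₁ such that for every measurable set S ⊆ Ω₁, μ₁(S) ≤ e^{ε₁}·μ₁'(S) + δ₁ and μ₁'(S) ≤ e^{ε₁}·μ₁(S) + δ₁. Let κ, κ' be Markov kernels from Ω₁ to a measurable space Ω₂ such that for every m ∈ Ω₁ and every measurable set T ⊆ Ω₂, κ(m)(T) ≤ e^{ε₂}·κ'(m)(T) + δ₂ and κ'(m)(T) ≤ e^{ε₂}·κ(m)(T) + δ₂. Then for every measurable set T ⊆ Ω₂, (μ₁.bind κ)(T) ≤ e^{ε₁+ε₂}·(μ₁'.bind κ')(T) + δ₁ + δ₂. -/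
/-! Integrating the second mechanism's bound against the first turns `(μ.bind κ) T` into
`∫⁻ κ a T ∂μ`. The pointwise bound `κ a T ≤ e^{ε₂} κ' a T + δ₂` is first truncated to
`κ a T ≤ min 1 (e^{ε₂} κ' a T) + δ₂`, which is legitimate because `κ a T ≤ 1`. The truncated
function takes values in `[0, 1]`, and for such functions the layer-cake formula
`∫⁻ g ∂μ = ∫₀¹ μ {g ≥ t} dt` lifts the set-wise bound `μ S ≤ e^{ε₁} μ' S + δ₁` to
`∫⁻ g ∂μ ≤ e^{ε₁} ∫⁻ g ∂μ' + δ₁`. -/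

open MeasureTheory ProbabilityTheory Real Set
open scoped ENNReal

namespace MeasureTheory

variable {Ω : Type*} [MeasurableSpace Ω]

theorem lintegral_eq_setLIntegral_Ioc_meas_le (μ : Measure Ω) {g : Ω → ℝ≥0∞}
    (hg : Measurable g) (hg1 : ∀ a, g a ≤ 1) :
    ∫⁻ a, g a ∂μ = ∫⁻ t in Ioc (0 : ℝ) 1, μ {a | t ≤ (g a).toReal} := by
  have hg_fin : ∀ a, g a ≠ ∞ := fun a => ((hg1 a).trans_lt ENNReal.one_lt_top).ne
  have hg_toReal_le : ∀ a, (g a).toReal ≤ 1 := fun a =>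
    ENNReal.toReal_le_of_le_ofReal zero_le_one (by simpa using hg1 a)
  have h_empty : ∀ t ∈ Ioi (1 : ℝ), μ {a | t ≤ (g a).toReal} = 0 := fun t ht => by
    have : {a | t ≤ (g a).toReal} = ∅ :=
      eq_empty_of_forall_notMem fun a ha => (hg_toReal_le a).not_gt (ht.trans_le ha)
    simp [this]
  calc ∫⁻ a, g a ∂μ = ∫⁻ a, ENNReal.ofReal (g a).toReal ∂μ := by
        simp only [ENNReal.ofReal_toReal (hg_fin _)]
    _ = ∫⁻ t in Ioi (0 : ℝ), μ {a | t ≤ (g a).toReal} :=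
        lintegral_eq_lintegral_meas_le μ (ae_of_all _ fun _ => ENNReal.toReal_nonneg)
          hg.ennreal_toReal.aemeasurable
    _ = ∫⁻ t in Ioc (0 : ℝ) 1, μ {a | t ≤ (g a).toReal} := by
        rw [← Ioc_union_Ioi_eq_Ioi zero_le_one,
          lintegral_union measurableSet_Ioi (Ioc_disjoint_Ioi le_rfl),
          setLIntegral_congr_fun measurableSet_Ioi h_empty, lintegral_zero, add_zero]

theorem lintegral_le_mul_lintegral_add_of_measure_le {μ ν : Measure Ω} {C d : ℝ≥0∞}
    (h : ∀ S, MeasurableSet S → μ S ≤ C * ν S + d)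
    {g : Ω → ℝ≥0∞} (hg : Measurable g) (hg1 : ∀ a, g a ≤ 1) :
    ∫⁻ a, g a ∂μ ≤ C * ∫⁻ a, g a ∂ν + d := by
  have h_meas : ∀ t : ℝ, MeasurableSet {a | t ≤ (g a).toReal} := fun _ =>
    measurableSet_le measurable_const hg.ennreal_toReal
  have h_anti : Measurable fun t : ℝ => ν {a | t ≤ (g a).toReal} :=
    Antitone.measurable fun _ _ hst => measure_mono fun _ ha => hst.trans ha
  rw [lintegral_eq_setLIntegral_Ioc_meas_le μ hg hg1,
    lintegral_eq_setLIntegral_Ioc_meas_le ν hg hg1]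
  calc ∫⁻ t in Ioc (0 : ℝ) 1, μ {a | t ≤ (g a).toReal}
      ≤ ∫⁻ t in Ioc (0 : ℝ) 1, (C * ν {a | t ≤ (g a).toReal} + d) :=
        lintegral_mono fun t => h _ (h_meas t)
    _ = C * (∫⁻ t in Ioc (0 : ℝ) 1, ν {a | t ≤ (g a).toReal}) + d := by
        rw [lintegral_add_right _ measurable_const, lintegral_const_mul _ h_anti,
          lintegral_const, Measure.restrict_apply_univ, Real.volume_Ioc, sub_zero,
          ENNReal.ofReal_one, mul_one]

theorem Measure.bind_apply_le_mul_bind_apply_add {Ω' : Type*} [MeasurableSpace Ω']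
    {μ ν : Measure Ω} [IsProbabilityMeasure μ] {κ κ' : Kernel Ω Ω'} [IsMarkovKernel κ]
    {C₁ C₂ d₁ d₂ : ℝ≥0∞} (hμ : ∀ S, MeasurableSet S → μ S ≤ C₁ * ν S + d₁)
    (hκ : ∀ a T, MeasurableSet T → κ a T ≤ C₂ * κ' a T + d₂)
    {T : Set Ω'} (hT : MeasurableSet T) :
    (μ.bind fun a => κ a) T ≤ C₁ * C₂ * (ν.bind fun a => κ' a) T + d₁ + d₂ := by
  set g : Ω → ℝ≥0∞ := fun a => min 1 (C₂ * κ' a T)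
  have hκ'_meas : Measurable fun a => κ' a T := κ'.measurable_coe hT
  have hg : Measurable g := measurable_const.min (hκ'_meas.const_mul C₂)
  have h_trunc : ∀ a, κ a T ≤ g a + d₂ := fun a => by
    rw [← min_add_add_right]
    exact le_min (prob_le_one.trans le_self_add) (hκ a T hT)
  rw [Measure.bind_apply hT κ.measurable.aemeasurable,
    Measure.bind_apply hT κ'.measurable.aemeasurable]
  calc ∫⁻ a, κ a T ∂μ ≤ ∫⁻ a, (g a + d₂) ∂μ := lintegral_mono h_trunc
    _ = ∫⁻ a, g a ∂μ + d₂ := by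
        rw [lintegral_add_right _ measurable_const, lintegral_const, measure_univ, mul_one]
    _ ≤ C₁ * ∫⁻ a, g a ∂ν + d₁ + d₂ := by
        gcongr
        exact lintegral_le_mul_lintegral_add_of_measure_le hμ hg fun a => min_le_left _ _
    _ ≤ C₁ * ∫⁻ a, C₂ * κ' a T ∂ν + d₁ + d₂ := by
        gcongr with a
        exact min_le_right _ _
    _ = C₁ * C₂ * ∫⁻ a, κ' a T ∂ν + d₁ + d₂ := by
        rw [lintegral_const_mul _ hκ'_meas, mul_assoc]

end MeasureTheory

theorem dp_basic_composition_general
    {Ω₁ Ω₂ : Type*} [MeasurableSpace Ω₁] [MeasurableSpace Ω₂]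
    (μ₁ μ₁' : Measure Ω₁) [IsProbabilityMeasure μ₁]
    (κ κ' : Kernel Ω₁ Ω₂) [IsMarkovKernel κ]
    (ε₁ ε₂ δ₁ δ₂ : ℝ)
    (h₁ : ∀ S : Set Ω₁, MeasurableSet S →
      μ₁ S ≤ ENNReal.ofReal (exp ε₁) * μ₁' S + ENNReal.ofReal δ₁)
    (h₂ : ∀ (m : Ω₁) (T : Set Ω₂), MeasurableSet T →
      κ m T ≤ ENNReal.ofReal (exp ε₂) * κ' m T + ENNReal.ofReal δ₂) :
    ∀ T : Set Ω₂, MeasurableSet T →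
      (μ₁.bind fun a => κ a) T ≤
        ENNReal.ofReal (exp (ε₁ + ε₂)) * (μ₁'.bind fun a => κ' a) T
          + ENNReal.ofReal δ₁ + ENNReal.ofReal δ₂ := by
  intro T hT
  rw [exp_add, ENNReal.ofReal_mul (exp_pos ε₁).le]
  exact Measure.bind_apply_le_mul_bind_apply_add h₁ h₂ hT

theorem dp_basic_composition
    {Ω₁ Ω₂ : Type*} [MeasurableSpace Ω₁] [MeasurableSpace Ω₂]
    (μ₁ μ₁' : Measure Ω₁) [IsProbabilityMeasure μ₁] [IsProbabilityMeasure μ₁']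
    (κ κ' : Kernel Ω₁ Ω₂) [IsMarkovKernel κ] [IsMarkovKernel κ']
    (ε₁ ε₂ δ₁ δ₂ : ℝ) (hε₁ : 0 ≤ ε₁) (hε₂ : 0 ≤ ε₂) (hδ₁ : 0 ≤ δ₁) (hδ₂ : 0 ≤ δ₂)
    (h₁ : ∀ S : Set Ω₁, MeasurableSet S →
      μ₁ S ≤ ENNReal.ofReal (exp ε₁) * μ₁' S + ENNReal.ofReal δ₁)
    (h₁' : ∀ S : Set Ω₁, MeasurableSet S →
      μ₁' S ≤ ENNReal.ofReal (exp ε₁) * μ₁ S + ENNReal.ofReal δ₁)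
    (h₂ : ∀ (m : Ω₁) (T : Set Ω₂), MeasurableSet T →
      κ m T ≤ ENNReal.ofReal (exp ε₂) * κ' m T + ENNReal.ofReal δ₂)
    (h₂' : ∀ (m : Ω₁) (T : Set Ω₂), MeasurableSet T →
      κ' m T ≤ ENNReal.ofReal (exp ε₂) * κ m T + ENNReal.ofReal δ₂) :
    ∀ T : Set Ω₂, MeasurableSet T →
      (μ₁.bind fun a => κ a) T ≤
        ENNReal.ofReal (exp (ε₁ + ε₂)) * (μ₁'.bind fun a => κ' a) T
          + ENNReal.ofReal δ₁ + ENNReal.ofReal δ₂ :=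
  dp_basic_composition_general μ₁ μ₁' κ κ' ε₁ ε₂ δ₁ δ₂ h₁ h₂
end

section
/- Composition with a deterministic post-processing step that agrees outside a low-probability bad set: Let μ and μ' be probability measures on a measurable space Ω such that for every measurable set S ⊆ Ω, μ(S) ≤ e^ε·μ'(S) + δ and μ'(S) ≤ e^ε·μ(S) + δ. Let B ⊆ Ω be a measurable 'bad' set with μ(B) ≤ δ* and μ'(B) ≤ δ*. Let f, g : Ω → M be measurable maps into a measurable space M such that f(ω) = g(ω) for every ω ∉ B. Then for every measurable set T ⊆ M, (μ.map f)(T) ≤ e^ε·(μ'.map g)(T) + δ + δ*, and symmetrically (μ'.map g)(T) ≤ e^ε·(μ.map f)(T) + δ + δ*. -/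
/-!
Outside `B` the events `{f ∈ T}` and `{g ∈ T}` coincide, so each is contained in the other
together with `B`. Hence replacing `f` by `g` costs at most the mass of `B`, and the privacy
inequality for the event `{g ∈ T}` does the rest.
-/

open MeasureTheory Real

section

variable {Ω M : Type*} {B : Set Ω} {f g : Ω → M}

lemma preimage_subset_preimage_union_of_eq_off (hfg : ∀ ω ∉ B, f ω = g ω) (T : Set M) :
    f ⁻¹' T ⊆ g ⁻¹' T ∪ B := by
  intro ω hω
  by_cases hωB : ω ∈ B
  · exact Or.inr hωB
  · exact Or.inl (by rwa [Set.mem_preimage, ← hfg ω hωB])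

variable [MeasurableSpace Ω] [MeasurableSpace M]

lemma map_apply_le_map_apply_add_of_eq_off (μ : Measure Ω) (hf : Measurable f)
    (hg : Measurable g) (hfg : ∀ ω ∉ B, f ω = g ω) {T : Set M} (hT : MeasurableSet T) :
    μ.map f T ≤ μ.map g T + μ B := by
  rw [Measure.map_apply hf hT, Measure.map_apply hg hT]
  calc μ (f ⁻¹' T) ≤ μ (g ⁻¹' T ∪ B) :=
        measure_mono (preimage_subset_preimage_union_of_eq_off hfg T)
    _ ≤ μ (g ⁻¹' T) + μ B := measure_union_le _ _

lemma map_apply_le_of_eq_off {μ μ' : Measure Ω} {c d d' : ENNReal}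
    (hDP : ∀ S : Set Ω, MeasurableSet S → μ S ≤ c * μ' S + d) (hμB : μ B ≤ d')
    (hf : Measurable f) (hg : Measurable g) (hfg : ∀ ω ∉ B, f ω = g ω)
    {T : Set M} (hT : MeasurableSet T) :
    μ.map f T ≤ c * μ'.map g T + d + d' :=
  calc μ.map f T ≤ μ.map g T + μ B := map_apply_le_map_apply_add_of_eq_off μ hf hg hfg hT
    _ ≤ c * μ'.map g T + d + d' := by
      rw [Measure.map_apply hg hT, Measure.map_apply hg hT]
      exact add_le_add (hDP _ (hg hT)) hμB

end

theorem dp_postprocess_agree_outside_bad_set_general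
    {Ω M : Type*} [MeasurableSpace Ω] [MeasurableSpace M]
    (μ μ' : Measure Ω)
    (ε δ δstar : ℝ)
    (hDP : ∀ S : Set Ω, MeasurableSet S →
      μ S ≤ ENNReal.ofReal (exp ε) * μ' S + ENNReal.ofReal δ)
    (hDP' : ∀ S : Set Ω, MeasurableSet S →
      μ' S ≤ ENNReal.ofReal (exp ε) * μ S + ENNReal.ofReal δ)
    (B : Set Ω)
    (hμB : μ B ≤ ENNReal.ofReal δstar) (hμ'B : μ' B ≤ ENNReal.ofReal δstar)
    (f g : Ω → M) (hf : Measurable f) (hg : Measurable g)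
    (hfg : ∀ ω ∉ B, f ω = g ω) :
    ∀ T : Set M, MeasurableSet T →
      (μ.map f) T ≤ ENNReal.ofReal (exp ε) * (μ'.map g) T
          + ENNReal.ofReal δ + ENNReal.ofReal δstar ∧
      (μ'.map g) T ≤ ENNReal.ofReal (exp ε) * (μ.map f) T
          + ENNReal.ofReal δ + ENNReal.ofReal δstar :=
  fun _ hT =>
    ⟨map_apply_le_of_eq_off hDP hμB hf hg hfg hT,
      map_apply_le_of_eq_off hDP' hμ'B hg hf (fun ω hω => (hfg ω hω).symm) hT⟩

theorem dp_postprocess_agree_outside_bad_set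
    {Ω M : Type*} [MeasurableSpace Ω] [MeasurableSpace M]
    (μ μ' : Measure Ω) [IsProbabilityMeasure μ] [IsProbabilityMeasure μ']
    (ε δ δstar : ℝ) (hε : 0 ≤ ε) (hδ : 0 ≤ δ) (hδstar : 0 ≤ δstar)
    (hDP : ∀ S : Set Ω, MeasurableSet S →
      μ S ≤ ENNReal.ofReal (exp ε) * μ' S + ENNReal.ofReal δ)
    (hDP' : ∀ S : Set Ω, MeasurableSet S →
      μ' S ≤ ENNReal.ofReal (exp ε) * μ S + ENNReal.ofReal δ)
    (B : Set Ω) (hB : MeasurableSet B)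
    (hμB : μ B ≤ ENNReal.ofReal δstar) (hμ'B : μ' B ≤ ENNReal.ofReal δstar)
    (f g : Ω → M) (hf : Measurable f) (hg : Measurable g)
    (hfg : ∀ ω ∉ B, f ω = g ω) :
    ∀ T : Set M, MeasurableSet T →
      (μ.map f) T ≤ ENNReal.ofReal (exp ε) * (μ'.map g) T
          + ENNReal.ofReal δ + ENNReal.ofReal δstar ∧
      (μ'.map g) T ≤ ENNReal.ofReal (exp ε) * (μ.map f) T
          + ENNReal.ofReal δ + ENNReal.ofReal δstar :=
  dp_postprocess_agree_outside_bad_set_general μ μ' ε δ δstar hDP hDP' B hμB hμ'B f g hf hg hfg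
end

section
/- Sensitivity of the agreement statistic at the differing edge: Let V be a finite type, let G and G' be simple graphs on V such that G ≤ G' and the edge set of G' equals the edge set of G together with exactly one additional edge {x,y} (where x ≠ y and x, y are not adjacent in G). Let β be a real number with 0 ≤ β ≤ 1. Writing N_H(v) = {v} ∪ (neighbors of v in H) and d_H(v) = |N_H(v)| for a graph H, we have |(|N_{G'}(x) △ N_{G'}(y)| − β·max(d_{G'}(x), d_{G'}(y))) − (|N_G(x) △ N_G(y)| − β·max(d_G(x), d_G(y)))| ≤ 2 + β (as real numbers). -/
/-- The closed neighborhood of a vertex: the vertex together with its neighbors. -/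
def closedNbhd {V : Type*} [Fintype V] [DecidableEq V]
    (H : SimpleGraph V) [DecidableRel H.Adj] (v : V) : Finset V :=
  insert v (H.neighborFinset v)

/-!
Adding the edge `xy` enlarges `N(x)` by `y` and `N(y)` by `x`. Since `x ∈ N(x) \ N(y)` and
`y ∈ N(y) \ N(x)` before the edge is added, and both lie in the intersection afterwards, the
symmetric difference loses exactly the two points `x, y`, while both degrees (hence their
maximum) grow by one. So the statistic changes by exactly `-(2 + β)`.
-/

namespace Finset

variable {α : Type*} [DecidableEq α]

theorem symmDiff_insert_insert_eq_sdiff {A B : Finset α} {x y : α}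
    (hxA : x ∈ A) (hyB : y ∈ B) :
    symmDiff (insert y A) (insert x B) = symmDiff A B \ {x, y} := by
  ext a
  simp only [mem_symmDiff, mem_insert, mem_sdiff, mem_singleton]
  by_cases hax : a = x
  · subst hax; tauto
  by_cases hay : a = y
  · subst hay; tauto
  tauto

theorem card_symmDiff_insert_insert_add_two {A B : Finset α} {x y : α}
    (hxA : x ∈ A) (hxB : x ∉ B) (hyB : y ∈ B) (hyA : y ∉ A) (hxy : x ≠ y) :
    (symmDiff (insert y A) (insert x B)).card + 2 = (symmDiff A B).card := by
  have hsub : {x, y} ⊆ symmDiff A B := by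
    simp only [insert_subset_iff, singleton_subset_iff, mem_symmDiff]
    tauto
  rw [symmDiff_insert_insert_eq_sdiff hxA hyB, card_sdiff_of_subset hsub, card_pair hxy]
  have := card_le_card hsub
  rw [card_pair hxy] at this
  omega

end Finset

section ClosedNbhd

variable {V : Type*} [Fintype V] [DecidableEq V]

theorem mem_closedNbhd {H : SimpleGraph V} [DecidableRel H.Adj] {v a : V} :
    a ∈ closedNbhd H v ↔ a = v ∨ H.Adj v a := by
  rw [closedNbhd, Finset.mem_insert, SimpleGraph.mem_neighborFinset]

theorem mem_closedNbhd_self (H : SimpleGraph V) [DecidableRel H.Adj] (v : V) :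
    v ∈ closedNbhd H v :=
  mem_closedNbhd.2 (Or.inl rfl)

theorem closedNbhd_eq_insert_of_edgeSet_eq_insert {G G' : SimpleGraph V}
    [DecidableRel G.Adj] [DecidableRel G'.Adj] {x y : V}
    (hedge : G'.edgeSet = insert s(x, y) G.edgeSet) :
    closedNbhd G' x = insert y (closedNbhd G x) := by
  ext a
  simp only [Finset.mem_insert, mem_closedNbhd, ← SimpleGraph.mem_edgeSet, hedge,
    Set.mem_insert_iff, Sym2.eq_iff]
  grind

end ClosedNbhd

theorem agreement_statistic_sensitivity_differing_edge_general
    {V : Type*} [Fintype V] [DecidableEq V]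
    (G G' : SimpleGraph V) [DecidableRel G.Adj] [DecidableRel G'.Adj]
    (x y : V) (hxy : x ≠ y) (hnadj : ¬ G.Adj x y)
    (hedge : G'.edgeSet = insert s(x, y) G.edgeSet)
    (β : ℝ) (hβ0 : 0 ≤ β) :
    |((((symmDiff (closedNbhd G' x) (closedNbhd G' y)).card : ℝ)
        - β * max ((closedNbhd G' x).card : ℝ) ((closedNbhd G' y).card : ℝ))
      - (((symmDiff (closedNbhd G x) (closedNbhd G y)).card : ℝ)
        - β * max ((closedNbhd G x).card : ℝ) ((closedNbhd G y).card : ℝ)))|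
      ≤ 2 + β := by
  have hy_notMem : y ∉ closedNbhd G x := by
    rw [mem_closedNbhd]
    exact not_or.2 ⟨hxy.symm, hnadj⟩
  have hx_notMem : x ∉ closedNbhd G y := by
    rw [mem_closedNbhd]
    exact not_or.2 ⟨hxy, fun h ↦ hnadj h.symm⟩
  have hcard := Finset.card_symmDiff_insert_insert_add_two (mem_closedNbhd_self G x) hx_notMem
    (mem_closedNbhd_self G y) hy_notMem hxy
  have hedge_swap : G'.edgeSet = insert s(y, x) G.edgeSet := Sym2.eq_swap ▸ hedge
  rw [closedNbhd_eq_insert_of_edgeSet_eq_insert hedge,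
    closedNbhd_eq_insert_of_edgeSet_eq_insert hedge_swap, ← hcard,
    Finset.card_insert_of_notMem hy_notMem, Finset.card_insert_of_notMem hx_notMem]
  push_cast
  rw [max_add_add_right]
  refine le_of_eq ?_
  calc _ = |-(2 + β)| := by ring_nf
    _ = 2 + β := by rw [abs_neg, abs_of_nonneg (by linarith)]

theorem agreement_statistic_sensitivity_differing_edge
    {V : Type*} [Fintype V] [DecidableEq V]
    (G G' : SimpleGraph V) [DecidableRel G.Adj] [DecidableRel G'.Adj]
    (x y : V) (hxy : x ≠ y) (hnadj : ¬ G.Adj x y)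
    (hle : G ≤ G')
    (hedge : G'.edgeSet = insert s(x, y) G.edgeSet)
    (β : ℝ) (hβ0 : 0 ≤ β) (hβ1 : β ≤ 1) :
    |((((symmDiff (closedNbhd G' x) (closedNbhd G' y)).card : ℝ)
        - β * max ((closedNbhd G' x).card : ℝ) ((closedNbhd G' y).card : ℝ))
      - (((symmDiff (closedNbhd G x) (closedNbhd G y)).card : ℝ)
        - β * max ((closedNbhd G x).card : ℝ) ((closedNbhd G y).card : ℝ)))|
      ≤ 2 + β :=
  agreement_statistic_sensitivity_differing_edge_general G G' x y hxy hnadj hedge β hβ0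
end

section
/- Sensitivity of the agreement statistic at an incident edge: Let V be a finite type, let G and G' be simple graphs on V such that G ≤ G' and the edge set of G' equals the edge set of G together with exactly one additional edge {x,y} (where x ≠ y and x, y are not adjacent in G). Let β be a real number with 0 ≤ β ≤ 1, and let v ∈ V with v ≠ x and v ≠ y. Writing N_H(u) = {u} ∪ (neighbors of u in H) and d_H(u) = |N_H(u)| for a graph H, we have |(|N_{G'}(x) △ N_{G'}(v)| − β·max(d_{G'}(x), d_{G'}(v))) − (|N_G(x) △ N_G(v)| − β·max(d_G(x), d_G(v)))| ≤ 1 + β (as real numbers). -/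
open Finset
open scoped symmDiff

namespace Finset

variable {α : Type*} [DecidableEq α]

theorem card_symmDiff_le_add (s t u : Finset α) : #(s ∆ u) ≤ #(s ∆ t) + #(t ∆ u) :=
  (card_le_card (symmDiff_triangle s t u)).trans (card_union_le _ _)

theorem abs_card_symmDiff_sub_card_symmDiff_le (s t u : Finset α) :
    |(#(s ∆ u) : ℝ) - #(t ∆ u)| ≤ #(s ∆ t) := by
  have h₁ : (#(s ∆ u) : ℝ) ≤ #(s ∆ t) + #(t ∆ u) := mod_cast card_symmDiff_le_add s t u
  have h₂ : (#(t ∆ u) : ℝ) ≤ #(t ∆ s) + #(s ∆ u) := mod_cast card_symmDiff_le_add t s u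
  rw [symmDiff_comm t s] at h₂
  rw [abs_le]
  constructor <;> linarith

theorem abs_card_sub_card_le_card_symmDiff (s t : Finset α) :
    |(#s : ℝ) - #t| ≤ #(s ∆ t) := by
  have h := abs_card_symmDiff_sub_card_symmDiff_le s t ⊥
  rwa [symmDiff_bot, symmDiff_bot] at h

theorem card_insert_symmDiff_self_le_one (a : α) (s : Finset α) : #(insert a s ∆ s) ≤ 1 := by
  refine card_le_one.2 fun b hb c hc => ?_
  simp only [mem_symmDiff, mem_insert] at hb hc
  grind

end Finset

noncomputable def agreementStat {α : Type*} [DecidableEq α] (β : ℝ) (s t : Finset α) : ℝ :=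
  (#(s ∆ t) : ℝ) - β * max (#s : ℝ) (#t : ℝ)

theorem abs_agreementStat_sub_le {α : Type*} [DecidableEq α] {β : ℝ} (hβ : 0 ≤ β)
    (s s' t : Finset α) :
    |agreementStat β s' t - agreementStat β s t| ≤ (1 + β) * #(s' ∆ s) := by
  have hsymm := abs_card_symmDiff_sub_card_symmDiff_le s' s t
  have hmax : |max (#s' : ℝ) #t - max (#s : ℝ) #t| ≤ #(s' ∆ s) :=
    (abs_max_sub_max_le_abs (#s' : ℝ) #s #t).trans (abs_card_sub_card_le_card_symmDiff s' s)
  calc |agreementStat β s' t - agreementStat β s t|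
      = |((#(s' ∆ t) : ℝ) - #(s ∆ t)) - β * (max (#s' : ℝ) #t - max (#s : ℝ) #t)| := by
        unfold agreementStat; congr 1; ring
    _ ≤ |(#(s' ∆ t) : ℝ) - #(s ∆ t)| + β * |max (#s' : ℝ) #t - max (#s : ℝ) #t| :=
        (abs_sub _ _).trans_eq (by rw [abs_mul, abs_of_nonneg hβ])
    _ ≤ (1 + β) * #(s' ∆ s) := by rw [add_mul, one_mul]; gcongr

namespace SimpleGraph

variable {V : Type*} {G G' : SimpleGraph V} {x y : V}

theorem adj_iff_of_edgeSet_eq_insert (h : G'.edgeSet = insert s(x, y) G.edgeSet) {a b : V} :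
    G'.Adj a b ↔ G.Adj a b ∨ s(a, b) = s(x, y) := by
  rw [← mem_edgeSet, h, Set.mem_insert_iff, mem_edgeSet, or_comm]

variable [Fintype V] [DecidableEq V] [DecidableRel G.Adj] [DecidableRel G'.Adj]

theorem closedNbhd_eq_of_edgeSet_eq_insert (h : G'.edgeSet = insert s(x, y) G.edgeSet)
    {v : V} (hvx : v ≠ x) (hvy : v ≠ y) : closedNbhd G' v = closedNbhd G v := by
  ext u
  simp only [closedNbhd, mem_insert, mem_neighborFinset, adj_iff_of_edgeSet_eq_insert h,
    Sym2.eq_iff]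
  grind

theorem closedNbhd_left_eq_insert_of_edgeSet_eq_insert
    (h : G'.edgeSet = insert s(x, y) G.edgeSet) :
    closedNbhd G' x = insert y (closedNbhd G x) := by
  ext u
  simp only [closedNbhd, mem_insert, mem_neighborFinset, adj_iff_of_edgeSet_eq_insert h,
    Sym2.eq_iff]
  grind

end SimpleGraph

theorem agreement_statistic_sensitivity_incident_edge_general
    {V : Type*} [Fintype V] [DecidableEq V]
    (G G' : SimpleGraph V) [DecidableRel G.Adj] [DecidableRel G'.Adj]
    (x y : V)
    (hedge : G'.edgeSet = insert s(x, y) G.edgeSet)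
    (β : ℝ) (hβ0 : 0 ≤ β)
    (v : V) (hvx : v ≠ x) (hvy : v ≠ y) :
    |((((symmDiff (closedNbhd G' x) (closedNbhd G' v)).card : ℝ)
        - β * max ((closedNbhd G' x).card : ℝ) ((closedNbhd G' v).card : ℝ))
      - (((symmDiff (closedNbhd G x) (closedNbhd G v)).card : ℝ)
        - β * max ((closedNbhd G x).card : ℝ) ((closedNbhd G v).card : ℝ)))|
      ≤ 1 + β := by
  change |agreementStat β (closedNbhd G' x) (closedNbhd G' v)
    - agreementStat β (closedNbhd G x) (closedNbhd G v)| ≤ 1 + β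
  rw [SimpleGraph.closedNbhd_eq_of_edgeSet_eq_insert hedge hvx hvy,
    SimpleGraph.closedNbhd_left_eq_insert_of_edgeSet_eq_insert hedge]
  have hmove : (#(insert y (closedNbhd G x) ∆ closedNbhd G x) : ℝ) ≤ 1 :=
    mod_cast card_insert_symmDiff_self_le_one y (closedNbhd G x)
  exact (abs_agreementStat_sub_le hβ0 _ _ _).trans (mul_le_of_le_one_right (by linarith) hmove)

theorem agreement_statistic_sensitivity_incident_edge
    {V : Type*} [Fintype V] [DecidableEq V]
    (G G' : SimpleGraph V) [DecidableRel G.Adj] [DecidableRel G'.Adj]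
    (x y : V) (hxy : x ≠ y) (hnadj : ¬ G.Adj x y)
    (hle : G ≤ G')
    (hedge : G'.edgeSet = insert s(x, y) G.edgeSet)
    (β : ℝ) (hβ0 : 0 ≤ β) (hβ1 : β ≤ 1)
    (v : V) (hvx : v ≠ x) (hvy : v ≠ y) :
    |((((symmDiff (closedNbhd G' x) (closedNbhd G' v)).card : ℝ)
        - β * max ((closedNbhd G' x).card : ℝ) ((closedNbhd G' v).card : ℝ))
      - (((symmDiff (closedNbhd G x) (closedNbhd G v)).card : ℝ)
        - β * max ((closedNbhd G x).card : ℝ) ((closedNbhd G v).card : ℝ)))|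
      ≤ 1 + β :=
  agreement_statistic_sensitivity_incident_edge_general G G' x y hedge β hβ0 v hvx hvy
end

section
/- Combinatorial core of the lower bound (Theorem 1.2): Let m ≥ 1 be a natural number, let ε and δ be real numbers with 0 ≤ ε ≤ 1 and 0 ≤ δ ≤ 0.1, and let p : ({0,1}^m) × {1,…,m} → ℝ satisfy 0 ≤ p(τ, i) ≤ 1 for all τ and i, together with the privacy constraint: for every τ ∈ {0,1}^m and every i, p(τ[i←1], i) ≤ e^ε · p(τ[i←0], i) + δ, where τ[i←b] denotes τ with its i-th coordinate set to b. Then there exists τ ∈ {0,1}^m such that Σ_{i : τ_i = 0} p(τ, i) + Σ_{i : τ_i = 1} (1 − p(τ, i)) > m/10. -/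
/-!
Flipping the `i`-th coordinate pairs the instances up. On a pair `τ[i←0], τ[i←1]` the privacy
constraint forces the two costs of the `i`-th matching edge to add up to at least
`(1 - δ) / e^ε > 1/5`, so averaged over the cube each edge costs more than `1/10`, and the mean
total cost, hence that of some instance, exceeds `m / 10`.
-/

open Real Finset

section BoolCube

variable {ι : Type*} [Fintype ι] [DecidableEq ι]

theorem sum_update_false_add_update_true {β : Type*} [AddCommMonoid β]
    (G : (ι → Bool) → β) (i : ι) :
    ∑ τ, (G (Function.update τ i false) + G (Function.update τ i true)) = 2 • ∑ τ, G τ := by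
  have hflip : Function.Involutive fun τ : ι → Bool => Function.update τ i (!τ i) := by
    intro τ
    simp
  have hpair : ∀ τ, G (Function.update τ i false) + G (Function.update τ i true)
      = G τ + G (Function.update τ i (!τ i)) := by
    intro τ
    have hself : Function.update τ i (τ i) = τ := Function.update_eq_self i τ
    cases hτ : τ i <;> rw [hτ] at hself <;> simp [hself, add_comm]
  rw [sum_congr rfl fun τ _ => hpair τ, sum_add_distrib, two_nsmul]
  exact congrArg _ (Equiv.sum_comp (hflip.toPerm _) G)

theorem exists_card_mul_half_le_sum (f : (ι → Bool) → ι → ℝ) (c : ℝ)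
    (hf : ∀ τ i, c ≤ f (Function.update τ i false) i + f (Function.update τ i true) i) :
    ∃ τ, Fintype.card ι * c / 2 ≤ ∑ i, f τ i := by
  have hcoord : ∀ i, 2 ^ Fintype.card ι * c / 2 ≤ ∑ τ, f τ i := by
    intro i
    have h := sum_le_sum fun τ (_ : τ ∈ univ) => hf τ i
    rw [sum_update_false_add_update_true (f · i), sum_const, card_univ,
      Fintype.card_fun, Fintype.card_bool, nsmul_eq_mul, nsmul_eq_mul] at h
    push_cast at h
    linarith
  have htotal : ∑ _τ : ι → Bool, (Fintype.card ι * c / 2) ≤ ∑ τ, ∑ i, f τ i := by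
    rw [sum_comm]
    calc ∑ _τ : ι → Bool, (Fintype.card ι * c / 2)
        = ∑ _i : ι, 2 ^ Fintype.card ι * c / 2 := by
          simp only [sum_const, card_univ, Fintype.card_fun, Fintype.card_bool, nsmul_eq_mul]
          push_cast
          ring
      _ ≤ ∑ i, ∑ τ, f τ i := sum_le_sum fun i _ => hcoord i
  obtain ⟨τ, -, hτ⟩ := exists_le_of_sum_le univ_nonempty htotal
  exact ⟨τ, hτ⟩

end BoolCube

theorem one_sub_div_le_add_one_sub {a x y δ : ℝ} (ha : 1 ≤ a) (hy : y ≤ 1)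
    (hxy : y ≤ a * x + δ) : (1 - δ) / a ≤ x + (1 - y) := by
  rw [div_le_iff₀ (by linarith)]
  -- `a * (x + (1 - y)) ≥ a * x + (1 - y) ≥ 1 - δ`
  nlinarith

theorem lower_bound_combinatorial_core_general
    (m : ℕ) (hm : 1 ≤ m) (ε δ : ℝ)
    (hε0 : 0 ≤ ε) (hε1 : ε ≤ 1) (hδ1 : δ ≤ 0.1)
    (p : (Fin m → Bool) → Fin m → ℝ)
    (hp1 : ∀ τ i, p τ i ≤ 1)
    (hpriv : ∀ (τ : Fin m → Bool) (i : Fin m),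
      p (Function.update τ i true) i ≤ exp ε * p (Function.update τ i false) i + δ) :
    ∃ τ : Fin m → Bool,
      (∑ i ∈ univ.filter (fun i => τ i = false), p τ i)
        + (∑ i ∈ univ.filter (fun i => τ i = true), (1 - p τ i)) > m / 10 := by
  obtain ⟨τ, hτ⟩ := exists_card_mul_half_le_sum
    (fun τ i => if τ i = true then 1 - p τ i else p τ i) ((1 - δ) / exp ε)
    fun τ i => by
      simpa [add_comm] using one_sub_div_le_add_one_sub (one_le_exp hε0) (hp1 _ i) (hpriv τ i)
  have hc : 1 / 5 < (1 - δ) / exp ε := by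
    have hexp : exp ε < 3 := (exp_le_exp.2 hε1).trans_lt exp_one_lt_three
    rw [lt_div_iff₀ (exp_pos ε)]
    norm_num at hδ1
    linarith
  have hm_real : (1 : ℝ) ≤ m := by exact_mod_cast hm
  refine ⟨τ, ?_⟩
  rw [sum_ite, Fintype.card_fin] at hτ
  simp only [Bool.not_eq_true] at hτ
  have hgain : (m : ℝ) / 10 < m * ((1 - δ) / exp ε) / 2 := by nlinarith
  linarith

theorem lower_bound_combinatorial_core
    (m : ℕ) (hm : 1 ≤ m) (ε δ : ℝ)
    (hε0 : 0 ≤ ε) (hε1 : ε ≤ 1) (hδ0 : 0 ≤ δ) (hδ1 : δ ≤ 0.1)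
    (p : (Fin m → Bool) → Fin m → ℝ)
    (hp0 : ∀ τ i, 0 ≤ p τ i) (hp1 : ∀ τ i, p τ i ≤ 1)
    (hpriv : ∀ (τ : Fin m → Bool) (i : Fin m),
      p (Function.update τ i true) i ≤ exp ε * p (Function.update τ i false) i + δ) :
    ∃ τ : Fin m → Bool,
      (∑ i ∈ univ.filter (fun i => τ i = false), p τ i)
        + (∑ i ∈ univ.filter (fun i => τ i = true), (1 - p τ i)) > m / 10 :=
  lower_bound_combinatorial_core_general m hm ε δ hε0 hε1 hδ1 p hp1 hpriv
end

section
/- Measure-theoretic form of the lower bound (Theorem 1.2): Let m ≥ 1 be a natural number and let ε, δ be real numbers with 0 ≤ ε ≤ 1 and 0 ≤ δ ≤ 0.1. Let M assign to each input τ ∈ {0,1}^m a probability measure M(τ) on the (finite, discrete) space {0,1}^m, such that for every pair of inputs τ, τ' differing in exactly one coordinate and every set S ⊆ {0,1}^m, M(τ)(S) ≤ e^ε · M(τ')(S) + δ. Then there exists an input τ ∈ {0,1}^m such that Σ_{i=1}^m M(τ)({o : o_i ≠ τ_i}) > m/10; that is, on some input the expected Hamming distance between the output and the input exceeds m/10.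 -/
open MeasureTheory Real Finset

/-!
Flipping coordinate `i` of an input `τ` gives a neighbouring input `τ'` for which
`{o | o i ≠ τ' i}` is the complement of `{o | o i ≠ τ i}`. Privacy applied to that complement
gives `1 - δ ≤ M τ {o | o i ≠ τ i} + e^ε M τ' {o | o i ≠ τ' i}`, so for `ε ≤ 1` and `δ ≤ 0.1`
the two error probabilities add up to more than `1/5`. Summing over all inputs and coordinates,
the average expected Hamming error exceeds `m/10`, so some input exceeds it.
-/

section Measures

variable {Ω : Type*} [MeasurableSpace Ω] {μ ν : Measure Ω} {s t : Set Ω} {c δ : ℝ}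

lemma measureReal_le_mul_add_of_le [IsFiniteMeasure μ] [IsFiniteMeasure ν] (hc : 0 ≤ c)
    (hδ : 0 ≤ δ) (h : μ s ≤ ENNReal.ofReal c * ν t + ENNReal.ofReal δ) :
    μ.real s ≤ c * ν.real t + δ := by
  refine ENNReal.toReal_le_of_le_ofReal (by positivity) ?_
  rwa [ENNReal.ofReal_add (by positivity) hδ, ENNReal.ofReal_mul hc, ofReal_measureReal]

lemma one_sub_le_measureReal_add_of_compl_le [IsProbabilityMeasure μ] [IsFiniteMeasure ν]
    (hs : MeasurableSet s) (hc : 0 ≤ c) (hδ : 0 ≤ δ)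
    (h : μ sᶜ ≤ ENNReal.ofReal c * ν t + ENNReal.ofReal δ) :
    1 - δ ≤ μ.real s + c * ν.real t := by
  have := measureReal_le_mul_add_of_le hc hδ h
  rw [probReal_compl_eq_one_sub hs] at this
  linarith

end Measures

section Flip

variable {ι : Type*} [DecidableEq ι]

lemma card_filter_ne_update_not [Fintype ι] (τ : ι → Bool) (i : ι) :
    (univ.filter fun j => τ j ≠ Function.update τ i (!τ i) j).card = 1 := by
  rw [card_eq_one]
  refine ⟨i, ?_⟩
  ext j
  by_cases h : j = i
  · subst h; simp
  · simp [h]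

lemma setOf_apply_ne_update_not (τ : ι → Bool) (i : ι) :
    {o : ι → Bool | o i ≠ Function.update τ i (!τ i) i} = {o | o i ≠ τ i}ᶜ := by
  ext o
  simp

lemma update_not_involutive (i : ι) :
    Function.Involutive fun τ : ι → Bool => Function.update τ i (!τ i) := by
  intro τ
  simp

lemma exists_card_mul_div_two_lt_sum [Fintype ι] [Nonempty ι] (p : (ι → Bool) → ι → ℝ) (c : ℝ)
    (h : ∀ τ i, c < p τ i + p (Function.update τ i (!τ i)) i) :
    ∃ τ, Fintype.card ι * c / 2 < ∑ i, p τ i := by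
  suffices ∑ _τ : ι → Bool, Fintype.card ι * c / 2 < ∑ τ, ∑ i, p τ i by
    obtain ⟨τ, -, hτ⟩ := exists_lt_of_sum_lt this
    exact ⟨τ, hτ⟩
  have hpair (i : ι) : Fintype.card (ι → Bool) * c < 2 * ∑ τ, p τ i := by
    have hflip : ∑ τ, p (Function.update τ i (!τ i)) i = ∑ τ, p τ i :=
      Equiv.sum_comp (update_not_involutive i).toPerm (p · i)
    have := sum_lt_sum_of_nonempty univ_nonempty fun τ (_ : τ ∈ univ) => h τ i
    rw [sum_add_distrib, hflip, sum_const, card_univ, nsmul_eq_mul] at this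
    linarith
  have := sum_lt_sum_of_nonempty univ_nonempty fun i (_ : i ∈ univ) => hpair i
  rw [sum_const, card_univ, nsmul_eq_mul, ← mul_sum, sum_comm] at this
  simp only [sum_const, card_univ, nsmul_eq_mul]
  linarith

end Flip

lemma one_fifth_lt_add {a b ε δ : ℝ} (ha : 0 ≤ a) (hb : 0 ≤ b) (hε0 : 0 ≤ ε) (hε1 : ε ≤ 1)
    (hδ1 : δ ≤ 0.1) (h : 1 - δ ≤ a + exp ε * b) : 1 / 5 < a + b := by
  have hexp : exp ε < 2.7182818286 := (exp_le_exp.2 hε1).trans_lt exp_one_lt_d9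
  have hexp1 : 1 ≤ exp ε := one_le_exp hε0
  -- `1 - δ ≤ exp ε * (a + b)` and `0.9 / 2.72 > 1/5`
  nlinarith

theorem lower_bound_measure_theoretic
    (m : ℕ) (hm : 1 ≤ m) (ε δ : ℝ)
    (hε0 : 0 ≤ ε) (hε1 : ε ≤ 1) (hδ0 : 0 ≤ δ) (hδ1 : δ ≤ 0.1)
    (M : (Fin m → Bool) → Measure (Fin m → Bool))
    (hprob : ∀ τ, IsProbabilityMeasure (M τ))
    (hpriv : ∀ τ τ' : Fin m → Bool,
      (univ.filter (fun i => τ i ≠ τ' i)).card = 1 →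
      ∀ S : Set (Fin m → Bool),
        M τ S ≤ ENNReal.ofReal (exp ε) * M τ' S + ENNReal.ofReal δ) :
    ∃ τ : Fin m → Bool,
      (∑ i : Fin m, (M τ {o | o i ≠ τ i}).toReal) > m / 10 := by
  have : Nonempty (Fin m) := ⟨⟨0, hm⟩⟩
  have hpair (τ : Fin m → Bool) (i : Fin m) :
      1 / 5 < (M τ).real {o | o i ≠ τ i} +
        (M (Function.update τ i (!τ i))).real {o | o i ≠ Function.update τ i (!τ i) i} := by
    have hs : MeasurableSet {o : Fin m → Bool | o i ≠ τ i} :=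
      measurableSet_eq_fun (measurable_pi_apply i) measurable_const |>.compl
    rw [setOf_apply_ne_update_not]
    exact one_fifth_lt_add measureReal_nonneg measureReal_nonneg hε0 hε1 hδ1 <|
      one_sub_le_measureReal_add_of_compl_le hs (exp_pos ε).le hδ0 <|
        hpriv _ _ (card_filter_ne_update_not τ i) _
  obtain ⟨τ, hτ⟩ := exists_card_mul_div_two_lt_sum _ _ hpair
  rw [Fintype.card_fin] at hτ
  exact ⟨τ, lt_of_eq_of_lt (by ring) hτ⟩
end
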